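/- For every β ∈ ℤ, the bilinear form c_{n,β} on 𝔡 is a Lie algebra 2-cocycle: c_{n,β}(D₁, D₂) = −c_{n,β}(D₂, D₁) for all D₁, D₂ ∈ 𝔡, and c_{n,β}([D₁, D₂], D₃) + c_{n,β}([D₂, D₃], D₁) + c_{n,β}([D₃, D₁], D₂) = 0 for all D₁, D₂, D₃ ∈ 𝔡. -/

import Mathlib

noncomputable section

/-- `K = ℂ((z))`, the field of formal Laurent series over `ℂ`. -/
abbrev K : Type := LaurentSeries ℂ

/-- The formal derivative of a Laurent series. -/
def fd (f : K) : K :=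
  ⟨fun k => ((k + 1 : ℤ) : ℂ) * f.coeff (k + 1), by
    apply Set.IsPWO.mono (f.isPWO_support.image_of_monotone
      (f := fun x => x - 1) (fun _ _ h => sub_le_sub_right h 1))
    intro k hk
    have : f.coeff (k + 1) ≠ 0 := by
      intro h
      simp [Function.mem_support, h] at hk
    exact ⟨k + 1, this, by ring⟩⟩

open LaurentPolynomial

/-- The ring `R = ℂ[z, z⁻¹]` of Laurent polynomials. -/
abbrev Rl : Type := LaurentPolynomial ℂ

/-- The inclusion `R = ℂ[z, z⁻¹] ⊆ K`. -/
def toK (f : Rl) : K :=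
  ⟨fun k => f.coeff k, by
    refine (f.coeff.support.finite_toSet.isPWO).mono (fun k hk => ?_)
    simpa [Finsupp.mem_support_iff] using hk⟩

/-- The residue of a Laurent series: the coefficient of `z⁻¹`. -/
def Res (f : K) : ℂ := f.coeff (-1)

/-- The formal derivative of a Laurent polynomial. -/
def rd (f : Rl) : Rl :=
  f.coeff.sum fun m a => (AddMonoidAlgebra.ofCoeff (Finsupp.single (m - 1) ((m : ℂ) * a)) : Rl)

/-- The entrywise formal derivative of a matrix of Laurent polynomials. -/
def matD {n : ℕ} (A : Matrix (Fin n) (Fin n) Rl) : Matrix (Fin n) (Fin n) Rl :=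
  fun i j => rd (A i j)

/-- The bracket `[(A,h),(B,k)] = (AB − BA + h·B′ − k·A′, h·k′ − k·h′)` on
`𝔡 = Matₙ(R) × R`, corresponding to the commutator of the associated endomorphisms
`v ↦ A·v + h • v′` of `V = Kⁿ`. -/
def dBracket {n : ℕ} (D₁ D₂ : Matrix (Fin n) (Fin n) Rl × Rl) :
    Matrix (Fin n) (Fin n) Rl × Rl :=
  (D₁.1 * D₂.1 - D₂.1 * D₁.1 + D₁.2 • matD D₂.1 - D₂.2 • matD D₁.1,
    D₁.2 * rd D₂.2 - D₂.2 * rd D₁.2)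

/-- The bilinear form
`c_{n,β}((A,h),(B,k)) = Res( Tr(A·B′) + ((1−2β)/2)(h″·Tr B − k″·Tr A) + (n(1−6β+6β²)/12)(h‴k − k‴h) )`
on `𝔡`. -/
def cnb (n : ℕ) (β : ℤ) (D₁ D₂ : Matrix (Fin n) (Fin n) Rl × Rl) : ℂ :=
  Res ((∑ i, ∑ j, toK (D₁.1 i j) * fd (toK (D₂.1 j i)))
    + (((1 : ℂ) - 2 * (β : ℂ)) / 2) •
        (fd (fd (toK D₁.2)) * (∑ i, toK (D₂.1 i i))
          - fd (fd (toK D₂.2)) * (∑ i, toK (D₁.1 i i)))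
    + (((n : ℂ) * (1 - 6 * (β : ℂ) + 6 * (β : ℂ) ^ 2)) / 12) •
        (fd (fd (fd (toK D₁.2))) * toK D₂.2 - fd (fd (fd (toK D₂.2))) * toK D₁.2))

/-!
`c_{n,β}` is the residue of an `R`-valued form built from the derivation `d/dz` alone. For any
derivation `d` of a commutative ring this form is a cocycle modulo exact elements: its
symmetrization is `d tr(A B)`, and its cyclic sum over brackets is `d` applied to
`tr(A B C) - tr(B A C)`, a trace term, and the Wronskian of `h₁, h₂, h₃`. Residues of derivatives
vanish.
-/

namespace Derivation

variable {k S : Type*} [CommRing k] [CommRing S] [Algebra k S] (d : Derivation k S S)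

theorem leibniz_mul (f g : S) : d (f * g) = d f * g + f * d g := by
  rw [d.leibniz, smul_eq_mul, smul_eq_mul, add_comm, mul_comm]

/-- The Virasoro cocycle `f‴g - g‴f` summed cyclically over Witt brackets `f g' - g f'`. -/
theorem virasoro_cyclic_sum (f g h : S) :
    (d (d (d (f * d g - g * d f))) * h - d (d (d h)) * (f * d g - g * d f))
      + (d (d (d (g * d h - h * d g))) * f - d (d (d f)) * (g * d h - h * d g))
      + (d (d (d (h * d f - f * d h))) * g - d (d (d g)) * (h * d f - f * d h))
      = d !![f, g, h; d f, d g, d h; d (d f), d (d g), d (d h)].det := by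
  simp only [Matrix.det_fin_three, Matrix.of_apply, Matrix.cons_val', Matrix.cons_val_zero,
    Matrix.cons_val_one, Matrix.cons_val_two, Matrix.empty_val', Matrix.cons_val_fin_one,
    Matrix.head_cons, Matrix.tail_cons, Matrix.head_fin_const, map_add, map_sub, leibniz_mul]
  ring

theorem mixed_cyclic_sum (h₁ h₂ h₃ t₁ t₂ t₃ : S) :
    (d (d (h₁ * d h₂ - h₂ * d h₁)) * t₃ - d (d h₃) * (h₁ * d t₂ - h₂ * d t₁))
      + (d (d (h₂ * d h₃ - h₃ * d h₂)) * t₁ - d (d h₁) * (h₂ * d t₃ - h₃ * d t₂))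
      + (d (d (h₃ * d h₁ - h₁ * d h₃)) * t₂ - d (d h₂) * (h₃ * d t₁ - h₁ * d t₃))
      = d ((h₁ * d (d h₂) - h₂ * d (d h₁)) * t₃ + (h₂ * d (d h₃) - h₃ * d (d h₂)) * t₁
          + (h₃ * d (d h₁) - h₁ * d (d h₃)) * t₂) := by
  simp only [map_add, map_sub, leibniz_mul]
  ring

variable {ι : Type*} [Fintype ι]

theorem matrix_map_mul (A B : Matrix ι ι S) : (A * B).map d = A.map d * B + A * B.map d := by
  ext i j
  simp only [Matrix.map_apply, Matrix.add_apply, Matrix.mul_apply, map_sum, leibniz_mul,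
    Finset.sum_add_distrib]

theorem trace_map (A : Matrix ι ι S) : (A.map d).trace = d A.trace :=
  (map_sum d _ _).symm

theorem trace_mul_map_add_trace_mul_map (A B : Matrix ι ι S) :
    (A * B.map d).trace + (B * A.map d).trace = d (A * B).trace := by
  rw [← trace_map, matrix_map_mul, Matrix.trace_add, Matrix.trace_mul_comm B, add_comm]

/-- The commutator of the operators `v ↦ A v + h • d v` on `ι → S`. -/
def diffOpBracket (D₁ D₂ : Matrix ι ι S × S) : Matrix ι ι S × S :=
  (D₁.1 * D₂.1 - D₂.1 * D₁.1 + D₁.2 • D₂.1.map d - D₂.2 • D₁.1.map d,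
    D₁.2 * d D₂.2 - D₂.2 * d D₁.2)

def diffOpForm (a b : k) (D₁ D₂ : Matrix ι ι S × S) : S :=
  (D₁.1 * D₂.1.map d).trace
    + a • (d (d D₁.2) * D₂.1.trace - d (d D₂.2) * D₁.1.trace)
    + b • (d (d (d D₁.2)) * D₂.2 - d (d (d D₂.2)) * D₁.2)

theorem trace_diffOpBracket (D₁ D₂ : Matrix ι ι S × S) :
    (diffOpBracket d D₁ D₂).1.trace = D₁.2 * d D₂.1.trace - D₂.2 * d D₁.1.trace := by
  simp only [diffOpBracket, Matrix.trace_add, Matrix.trace_sub, Matrix.trace_smul, trace_map,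
    Matrix.trace_mul_comm D₂.1, sub_self, zero_add, smul_eq_mul]

theorem trace_diffOpBracket_mul_map_cyclic_sum (D₁ D₂ D₃ : Matrix ι ι S × S) :
    ((diffOpBracket d D₁ D₂).1 * D₃.1.map d).trace
      + ((diffOpBracket d D₂ D₃).1 * D₁.1.map d).trace
      + ((diffOpBracket d D₃ D₁).1 * D₂.1.map d).trace
      = d ((D₁.1 * D₂.1 * D₃.1).trace - (D₂.1 * D₁.1 * D₃.1).trace) := by
  obtain ⟨A, h₁⟩ := D₁
  obtain ⟨B, h₂⟩ := D₂
  obtain ⟨C, h₃⟩ := D₃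
  rw [map_sub, ← trace_map, ← trace_map]
  simp only [diffOpBracket, matrix_map_mul, Matrix.add_mul, Matrix.sub_mul, Matrix.smul_mul,
    Matrix.trace_add, Matrix.trace_sub, Matrix.trace_smul, smul_eq_mul]
  rw [Matrix.trace_mul_cycle B C, ← Matrix.trace_mul_cycle B (A.map d),
    ← Matrix.trace_mul_cycle A (B.map d), Matrix.trace_mul_cycle A C,
    Matrix.trace_mul_comm (C.map d) (A.map d), Matrix.trace_mul_comm (C.map d) (B.map d),
    Matrix.trace_mul_comm (B.map d) (A.map d)]
  ring

theorem diffOpForm_add_swap (a b : k) (D₁ D₂ : Matrix ι ι S × S) :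
    diffOpForm d a b D₁ D₂ + diffOpForm d a b D₂ D₁ = d (D₁.1 * D₂.1).trace := by
  rw [← trace_mul_map_add_trace_mul_map]
  simp only [diffOpForm]
  module

theorem diffOpForm_diffOpBracket_cyclic_sum (a b : k) (D₁ D₂ D₃ : Matrix ι ι S × S) :
    ∃ F, diffOpForm d a b (diffOpBracket d D₁ D₂) D₃ + diffOpForm d a b (diffOpBracket d D₂ D₃) D₁
      + diffOpForm d a b (diffOpBracket d D₃ D₁) D₂ = d F := by
  obtain ⟨A, h₁⟩ := D₁
  obtain ⟨B, h₂⟩ := D₂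
  obtain ⟨C, h₃⟩ := D₃
  refine ⟨(A * B * C).trace - (B * A * C).trace
    + a • ((h₁ * d (d h₂) - h₂ * d (d h₁)) * C.trace + (h₂ * d (d h₃) - h₃ * d (d h₂)) * A.trace
          + (h₃ * d (d h₁) - h₁ * d (d h₃)) * B.trace)
    + b • !![h₁, h₂, h₃; d h₁, d h₂, d h₃; d (d h₁), d (d h₂), d (d h₃)].det, ?_⟩
  have hM := trace_diffOpBracket_mul_map_cyclic_sum d (A, h₁) (B, h₂) (C, h₃)
  have hX := mixed_cyclic_sum d h₁ h₂ h₃ A.trace B.trace C.trace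
  have hV := virasoro_cyclic_sum d h₁ h₂ h₃
  simp only [diffOpForm, trace_diffOpBracket]
  rw [map_add, map_add, map_smul, map_smul, ← hM, ← hX, ← hV]
  simp only [diffOpBracket]
  module

end Derivation

section

open AddMonoidAlgebra

theorem toK_single (m : ℤ) (a : ℂ) : toK (single m a) = HahnSeries.single m a := by
  ext k
  simp only [toK, coeff_single, HahnSeries.coeff_single, Finsupp.single_apply, eq_comm]

theorem toK_add (f g : Rl) : toK (f + g) = toK f + toK g := rfl

theorem toK_smul (c : ℂ) (f : Rl) : toK (c • f) = c • toK f := rfl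

def toKRingHom : Rl →+* K :=
  liftNCRingHom HahnSeries.C
    { toFun := fun m => HahnSeries.single m.toAdd 1
      map_one' := rfl
      map_mul' := fun _ _ => by rw [HahnSeries.single_mul_single, mul_one, toAdd_mul] }
    fun _ _ => Commute.all _ _

theorem coe_toKRingHom : ⇑toKRingHom = toK := by
  funext f
  induction f using induction_linear with
  | zero => rfl
  | add f g hf hg => rw [map_add, hf, hg, toK_add]
  | single m a =>
    rw [toKRingHom, liftNCRingHom_single, toK_single, MonoidHom.coe_mk, OneHom.coe_mk,
      toAdd_ofAdd, HahnSeries.C_apply, HahnSeries.single_mul_single, zero_add, mul_one]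

theorem toK_mul (f g : Rl) : toK (f * g) = toK f * toK g := by
  rw [← coe_toKRingHom, map_mul]

theorem toK_sub (f g : Rl) : toK (f - g) = toK f - toK g := by
  rw [← coe_toKRingHom, map_sub]

theorem toK_sum {ι : Type*} (s : Finset ι) (f : ι → Rl) :
    toK (∑ i ∈ s, f i) = ∑ i ∈ s, toK (f i) := by
  rw [← coe_toKRingHom, map_sum]

theorem rd_zero : rd 0 = 0 := Finsupp.sum_zero_index

theorem rd_single (m : ℤ) (a : ℂ) : rd (single m a) = single (m - 1) (m * a) := by
  rw [rd, coeff_single, Finsupp.sum_single_index (by simp), ofCoeff_single]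

theorem rd_add (f g : Rl) : rd (f + g) = rd f + rd g :=
  Finsupp.sum_add_index' (fun _ => by simp) fun _ _ _ => by
    rw [mul_add, Finsupp.single_add, ofCoeff_add]

theorem coeff_rd (f : Rl) (k : ℤ) : (rd f).coeff k = ((k + 1 : ℤ) : ℂ) * f.coeff (k + 1) := by
  induction f using induction_linear with
  | zero => rw [rd_zero, coeff_zero, Finsupp.zero_apply, Finsupp.zero_apply, mul_zero]
  | add f g hf hg =>
    rw [rd_add, coeff_add, coeff_add, Finsupp.add_apply, Finsupp.add_apply, hf, hg, mul_add]
  | single m a =>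
    rw [rd_single, coeff_single, coeff_single, Finsupp.single_apply, Finsupp.single_apply]
    by_cases h : m = k + 1
    · simp [h]
    · rw [if_neg (by omega), if_neg h, mul_zero]

theorem coeff_rd_neg_one (f : Rl) : (rd f).coeff (-1) = 0 := by
  simp [coeff_rd]

theorem fd_toK (f : Rl) : fd (toK f) = toK (rd f) := by
  ext k
  exact (coeff_rd f k).symm

theorem rd_smul (c : ℂ) (f : Rl) : rd (c • f) = c • rd f := by
  ext k
  simp only [coeff_rd, coeff_smul, Finsupp.smul_apply, smul_eq_mul]
  ring

theorem rd_mul (f g : Rl) : rd (f * g) = rd f * g + f * rd g := by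
  induction f using induction_linear with
  | zero => simp [rd_zero]
  | add f₁ f₂ h₁ h₂ => simp only [add_mul, rd_add, h₁, h₂]; abel
  | single m a =>
    induction g using induction_linear with
    | zero => simp [rd_zero]
    | add g₁ g₂ h₁ h₂ => simp only [mul_add, rd_add, h₁, h₂]; abel
    | single l b =>
      simp only [single_mul_single, rd_single]
      rw [show m - 1 + l = m + l - 1 by ring, show m + (l - 1) = m + l - 1 by ring,
        ← single_add]
      congr 1
      push_cast
      ring

def rdDerivation : Derivation ℂ Rl Rl :=
  Derivation.mk' { toFun := rd, map_add' := rd_add, map_smul' := rd_smul } fun f g => by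
    rw [LinearMap.coe_mk, AddHom.coe_mk, rd_mul, smul_eq_mul, smul_eq_mul, mul_comm (rd f),
      add_comm]

theorem rdDerivation_apply (f : Rl) : rdDerivation f = rd f := rfl

end

theorem dBracket_eq_diffOpBracket {n : ℕ} (D₁ D₂ : Matrix (Fin n) (Fin n) Rl × Rl) :
    dBracket D₁ D₂ = rdDerivation.diffOpBracket D₁ D₂ := rfl

theorem cnb_eq_coeff_diffOpForm (n : ℕ) (β : ℤ) (D₁ D₂ : Matrix (Fin n) (Fin n) Rl × Rl) :
    cnb n β D₁ D₂ = (rdDerivation.diffOpForm ((1 - 2 * (β : ℂ)) / 2)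
      ((n : ℂ) * (1 - 6 * (β : ℂ) + 6 * (β : ℂ) ^ 2) / 12) D₁ D₂).coeff (-1) := by
  change _ = Res (toK _)
  simp only [cnb, Derivation.diffOpForm, Matrix.trace, Matrix.diag, Matrix.mul_apply,
    Matrix.map_apply, rdDerivation_apply, toK_add, toK_sub, toK_smul, toK_mul, toK_sum, fd_toK]

theorem cnb_is_two_cocycle_general (n : ℕ) (β : ℤ) :
    (∀ D₁ D₂ : Matrix (Fin n) (Fin n) Rl × Rl, cnb n β D₁ D₂ = - cnb n β D₂ D₁) ∧
    (∀ D₁ D₂ D₃ : Matrix (Fin n) (Fin n) Rl × Rl,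
      cnb n β (dBracket D₁ D₂) D₃ + cnb n β (dBracket D₂ D₃) D₁
        + cnb n β (dBracket D₃ D₁) D₂ = 0) := by
  refine ⟨fun D₁ D₂ => ?_, fun D₁ D₂ D₃ => ?_⟩
  · rw [eq_neg_iff_add_eq_zero, cnb_eq_coeff_diffOpForm, cnb_eq_coeff_diffOpForm,
      ← Finsupp.add_apply, ← AddMonoidAlgebra.coeff_add, Derivation.diffOpForm_add_swap,
      rdDerivation_apply, coeff_rd_neg_one]
  · simp only [dBracket_eq_diffOpBracket, cnb_eq_coeff_diffOpForm, ← Finsupp.add_apply,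
      ← AddMonoidAlgebra.coeff_add]
    obtain ⟨F, hF⟩ := rdDerivation.diffOpForm_diffOpBracket_cyclic_sum
      ((1 - 2 * (β : ℂ)) / 2) ((n : ℂ) * (1 - 6 * (β : ℂ) + 6 * (β : ℂ) ^ 2) / 12) D₁ D₂ D₃
    rw [hF, rdDerivation_apply, coeff_rd_neg_one]

/-- For every `β ∈ ℤ` the bilinear form `c_{n,β}` is a Lie-algebra 2-cocycle on `𝔡`:
it is antisymmetric and satisfies the cocycle (Jacobi) identity with respect to the
bracket of `𝔡`. -/
theorem cnb_is_two_cocycle (n : ℕ) (hn : 1 ≤ n) (β : ℤ) :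
    (∀ D₁ D₂ : Matrix (Fin n) (Fin n) Rl × Rl, cnb n β D₁ D₂ = - cnb n β D₂ D₁) ∧
    (∀ D₁ D₂ D₃ : Matrix (Fin n) (Fin n) Rl × Rl,
      cnb n β (dBracket D₁ D₂) D₃ + cnb n β (dBracket D₂ D₃) D₁
        + cnb n β (dBracket D₃ D₁) D₂ = 0) :=
  cnb_is_two_cocycle_general n β

end
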